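/- Suppose 2 ≤ p ≤ n−1 and 2p ≥ n. If λ ∈ 𝒫_p satisfies λ₁ ≥ λ₂ ≥ ⋯ ≥ λₙ, λ₁ ≥ 1, λₙ ≥ −λ₁/(2(p−1)), and λ_{n−p+1} + λ_{n−p+2} + ⋯ + λₙ ≥ 1/λ₁, then F^{nn}(λ) ≥ (λ₁/2)^{binom(n−1,p−1)} · (1/λ₁)^{binom(n−1,p) − 1} ≥ λ₁ / 2^{binom(n−1,p−1)}. (This is the key Case 2 estimate in the proof of Lemma 2.4; the last inequality uses that binom(n−1,p−1) ≥ binom(n−1,p) when 2p ≥ n.) -/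

import Mathlib

open Finset

/-- `F(λ) = ∏_{|I|=p} Σ_{i∈I} λ_i`, the product over all `p`-element subsets of `{1,…,n}`. -/
noncomputable def Fval (n p : ℕ) (lam : Fin n → ℝ) : ℝ :=
  ∏ I ∈ Finset.powersetCard p (Finset.univ : Finset (Fin n)), ∑ i ∈ I, lam i

/-- `F^{kk}(λ) = ∂F/∂λ_k = Σ_{|I|=p, k∈I} ∏_{|J|=p, J≠I} Σ_{i∈J} λ_i`. -/
noncomputable def Fkk (n p : ℕ) (k : Fin n) (lam : Fin n → ℝ) : ℝ :=
  ∑ I ∈ (Finset.powersetCard p (Finset.univ : Finset (Fin n))).filter (fun I => k ∈ I),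
    ∏ J ∈ (Finset.powersetCard p (Finset.univ : Finset (Fin n))).erase I, ∑ i ∈ J, lam i

/-- The Gårding cone `𝒫_p`: all sums of `p` of the entries are positive. -/
def Pcone (n p : ℕ) (lam : Fin n → ℝ) : Prop :=
  ∀ I ∈ Finset.powersetCard p (Finset.univ : Finset (Fin n)), 0 < ∑ i ∈ I, lam i

/-!
`F^{nn}(λ)` is at least the single term of its sum indexed by `I₀ = {n-p+1, …, n}`, the product
of `S_J(λ)` over all `p`-sets `J ≠ I₀`. Since `λ` is decreasing, a `J` containing `1` has
`S_J ≥ λ₁ + (p-1)λₙ ≥ λ₁/2`, while a `J` avoiding `1` has `S_J ≥ S_{I₀} ≥ 1/λ₁`; there are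
`C(n-1, p-1)` sets of the first kind and `C(n-1, p) - 1` of the second. The second inequality
only compares exponents, using `C(n-1, p) ≤ C(n-1, p-1)` when `n ≤ 2p`.
-/

namespace Finset

variable {ι : Type*}

lemma pow_card_filter_mul_pow_card_filter_not_le_prod {R : Type*} [CommMonoidWithZero R]
    [Preorder R] [ZeroLEOneClass R] [PosMulMono R] {f : ι → R} {s : Finset ι} (q : ι → Prop)
    [DecidablePred q] {c d : R} (hc : 0 ≤ c) (hd : 0 ≤ d) (hqc : ∀ i ∈ s, q i → c ≤ f i)
    (hqd : ∀ i ∈ s, ¬ q i → d ≤ f i) :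
    c ^ #{i ∈ s | q i} * d ^ #{i ∈ s | ¬ q i} ≤ ∏ i ∈ s, f i := by
  rw [← prod_const, ← prod_const, ← prod_ite]
  refine prod_le_prod (fun i _ ↦ by split_ifs <;> assumption) fun i hi ↦ ?_
  split_ifs with hq
  exacts [hqc i hi hq, hqd i hi hq]

variable [DecidableEq ι]

lemma sum_le_sum_of_card_eq {M : Type*} [AddCommMonoid M] [LinearOrder M] [IsOrderedAddMonoid M]
    {f : ι → M} {s t : Finset ι} (hcard : #s = #t)
    (h : ∀ i ∈ s \ t, ∀ j ∈ t \ s, f i ≤ f j) : ∑ i ∈ s, f i ≤ ∑ j ∈ t, f j := by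
  rcases (s \ t).eq_empty_or_nonempty with hst | hst
  · have hts : t \ s = ∅ := by
      rw [← card_eq_zero, ← card_sdiff_comm hcard, hst, card_empty]
    rw [sdiff_eq_empty_iff_subset] at hst hts
    rw [hst.antisymm hts]
  · obtain ⟨i₀, hi₀, hmax⟩ := exists_max_image (s \ t) f hst
    calc ∑ i ∈ s, f i = ∑ i ∈ s ∩ t, f i + ∑ i ∈ s \ t, f i :=
          (sum_inter_add_sum_sdiff s t f).symm
      _ ≤ ∑ i ∈ s ∩ t, f i + #(s \ t) • f i₀ := add_le_add le_rfl (sum_le_card_nsmul _ _ _ hmax)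
      _ = ∑ i ∈ t ∩ s, f i + #(t \ s) • f i₀ := by rw [inter_comm, card_sdiff_comm hcard]
      _ ≤ ∑ i ∈ t ∩ s, f i + ∑ j ∈ t \ s, f j :=
        add_le_add le_rfl (card_nsmul_le_sum _ _ _ fun j hj ↦ h i₀ hi₀ j hj)
      _ = ∑ j ∈ t, f j := sum_inter_add_sum_sdiff t s f

lemma add_card_sub_one_nsmul_le_sum {M : Type*} [AddCommMonoid M] [PartialOrder M]
    [IsOrderedAddMonoid M] {f : ι → M} {s : Finset ι} {a : ι} (ha : a ∈ s) {m : M}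
    (hm : ∀ i ∈ s, m ≤ f i) : f a + (#s - 1) • m ≤ ∑ i ∈ s, f i := by
  rw [← add_sum_erase s f ha, ← card_erase_of_mem ha]
  exact add_le_add le_rfl (card_nsmul_le_sum _ _ _ fun i hi ↦ hm i (mem_of_mem_erase hi))

lemma card_filter_mem_powersetCard {s : Finset ι} {a : ι} (ha : a ∈ s) {k : ℕ} (hk : 1 ≤ k) :
    #{t ∈ s.powersetCard k | a ∈ t} = (#s - 1).choose (k - 1) := by
  simpa using card_filter_powersetCard_subset {a} s k (by simpa) (by simpa)

lemma card_filter_notMem_powersetCard {s : Finset ι} {a : ι} (ha : a ∈ s) (k : ℕ) :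
    #{t ∈ s.powersetCard k | a ∉ t} = (#s - 1).choose k := by
  have : {t ∈ s.powersetCard k | a ∉ t} = (s.erase a).powersetCard k := by
    ext t
    simp only [mem_filter, mem_powersetCard, subset_erase]
    tauto
  rw [this, card_powersetCard, card_erase_of_mem ha]

end Finset

lemma Nat.choose_succ_le_choose {m k : ℕ} (h : m ≤ 2 * k + 1) : m.choose (k + 1) ≤ m.choose k := by
  refine Nat.le_of_mul_le_mul_right (c := k + 1) ?_ k.succ_pos
  rw [Nat.choose_succ_right_eq]
  exact Nat.mul_le_mul_left _ (by omega)

lemma div_two_pow_le_half_pow_mul_inv_pow {x : ℝ} (hx : 1 ≤ x) {a m : ℕ} (hm : m < a) :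
    x / 2 ^ a ≤ (x / 2) ^ a * (1 / x) ^ m := by
  have hx0 : x ≠ 0 := by positivity
  have : (x / 2) ^ a * (1 / x) ^ m = x ^ (a - m) / 2 ^ a := by
    rw [div_pow, one_div, inv_pow, pow_sub₀ _ hx0 hm.le]
    field_simp
  rw [this]
  gcongr
  exact le_self_pow₀ hx (by omega)

lemma half_le_add_mul_of_neg_div_le {x y q : ℝ} (hq : 0 < q) (h : -x / (2 * q) ≤ y) :
    x / 2 ≤ x + q * y := by
  rw [div_le_iff₀ (by positivity)] at h
  linarith

lemma Fin.card_filter_sub_le_val {n p : ℕ} (hpn : p ≤ n) : #{i : Fin n | n - p ≤ (i : ℕ)} = p := by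
  have := card_filter_add_card_filter_not (s := univ) (p := fun i : Fin n ↦ (i : ℕ) < n - p)
  simp only [not_lt, Fin.card_filter_val_lt, card_univ, Fintype.card_fin] at this
  omega

lemma sum_filter_sub_le_val_le_sum_of_antitone {n p : ℕ} (hpn : p ≤ n) {lam : Fin n → ℝ}
    (hlam : Antitone lam) {J : Finset (Fin n)} (hJ : #J = p) :
    ∑ i ∈ univ.filter (fun i : Fin n => n - p ≤ (i : ℕ)), lam i ≤ ∑ i ∈ J, lam i :=
  sum_le_sum_of_card_eq ((Fin.card_filter_sub_le_val hpn).trans hJ.symm) fun i hi j hj ↦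
    hlam (by simp only [mem_sdiff, mem_filter, mem_univ, true_and] at hi hj; omega)

lemma prod_erase_le_Fkk {n p : ℕ} {lam : Fin n → ℝ} (hP : Pcone n p lam) {k : Fin n}
    {I : Finset (Fin n)} (hI : I ∈ powersetCard p univ) (hk : k ∈ I) :
    ∏ J ∈ (powersetCard p univ).erase I, ∑ i ∈ J, lam i ≤ Fkk n p k lam :=
  single_le_sum (f := fun I ↦ ∏ J ∈ (powersetCard p univ).erase I, ∑ i ∈ J, lam i)
    (fun _ _ ↦ prod_nonneg fun J hJ ↦ (hP J (mem_of_mem_erase hJ)).le) (mem_filter.2 ⟨hI, hk⟩)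

lemma pow_mul_pow_le_Fkk {n p : ℕ} (hp : 1 ≤ p) {lam : Fin n → ℝ} (hP : Pcone n p lam)
    {k a : Fin n} {I : Finset (Fin n)} (hI : I ∈ powersetCard p univ) (hk : k ∈ I) (ha : a ∉ I)
    {c d : ℝ} (hc : 0 ≤ c) (hd : 0 ≤ d)
    (hcJ : ∀ J ∈ powersetCard p univ, a ∈ J → c ≤ ∑ i ∈ J, lam i)
    (hdJ : ∀ J ∈ powersetCard p univ, J ≠ I → a ∉ J → d ≤ ∑ i ∈ J, lam i) :
    c ^ (n - 1).choose (p - 1) * d ^ ((n - 1).choose p - 1) ≤ Fkk n p k lam := by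
  have hcount_mem :
      #{J ∈ (powersetCard p univ).erase I | a ∈ J} = (n - 1).choose (p - 1) := by
    rw [filter_erase, erase_eq_of_notMem (by simp [ha]),
      card_filter_mem_powersetCard (mem_univ a) hp, card_univ, Fintype.card_fin]
  have hcount_notMem :
      #{J ∈ (powersetCard p univ).erase I | a ∉ J} = (n - 1).choose p - 1 := by
    rw [filter_erase, card_erase_of_mem (mem_filter.2 ⟨hI, ha⟩),
      card_filter_notMem_powersetCard (mem_univ a), card_univ, Fintype.card_fin]
  rw [← hcount_mem, ← hcount_notMem]
  refine (pow_card_filter_mul_pow_card_filter_not_le_prod (a ∈ ·) hc hd ?_ ?_).trans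
    (prod_erase_le_Fkk hP hI hk)
  · exact fun J hJ ↦ hcJ J (mem_of_mem_erase hJ)
  · exact fun J hJ ↦ hdJ J (mem_of_mem_erase hJ) (ne_of_mem_erase hJ)

/-- The Case 2 estimate in the proof of Lemma 2.4: under the stated hypotheses,
`F^{nn}(λ) ≥ (λ₁/2)^(C(n−1,p−1)) · (1/λ₁)^(C(n−1,p)−1) ≥ λ₁/2^(C(n−1,p−1))`. -/
theorem lemma24_case2 (n p : ℕ) (hp2 : 2 ≤ p) (hpn : p ≤ n - 1) (h2p : n ≤ 2 * p)
    (lam : Fin n → ℝ) (hP : Pcone n p lam)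
    (hsort : ∀ i j : Fin n, i ≤ j → lam j ≤ lam i)
    (h1 : 1 ≤ lam ⟨0, by omega⟩)
    (hlast : -(lam ⟨0, by omega⟩) / (2 * ((p : ℝ) - 1)) ≤ lam ⟨n - 1, by omega⟩)
    (hsum : 1 / lam ⟨0, by omega⟩ ≤
        ∑ i ∈ Finset.univ.filter (fun i : Fin n => n - p ≤ (i : ℕ)), lam i) :
    (lam ⟨0, by omega⟩ / 2) ^ ((n - 1).choose (p - 1)) *
        (1 / lam ⟨0, by omega⟩) ^ ((n - 1).choose p - 1) ≤
      Fkk n p ⟨n - 1, by omega⟩ lam ∧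
    lam ⟨0, by omega⟩ / 2 ^ ((n - 1).choose (p - 1)) ≤
      (lam ⟨0, by omega⟩ / 2) ^ ((n - 1).choose (p - 1)) *
        (1 / lam ⟨0, by omega⟩) ^ ((n - 1).choose p - 1) := by
  have hx : 0 < lam ⟨0, by omega⟩ := zero_lt_one.trans_le h1
  have hI₀ : univ.filter (fun i : Fin n => n - p ≤ (i : ℕ)) ∈ powersetCard p univ :=
    mem_powersetCard.2 ⟨subset_univ _, Fin.card_filter_sub_le_val (by omega)⟩
  have hcontaining : ∀ J ∈ powersetCard p univ, ⟨0, by omega⟩ ∈ J →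
      lam ⟨0, by omega⟩ / 2 ≤ ∑ i ∈ J, lam i := by
    intro J hJ h0J
    have hlast_le : ∀ i ∈ J, lam ⟨n - 1, by omega⟩ ≤ lam i :=
      fun i _ ↦ hsort i _ (Fin.le_def.2 (by simp; omega))
    calc lam ⟨0, _⟩ / 2 ≤ lam ⟨0, _⟩ + ((p : ℝ) - 1) * lam ⟨n - 1, by omega⟩ :=
          half_le_add_mul_of_neg_div_le (sub_pos.2 (Nat.one_lt_cast.2 (by omega))) hlast
      _ = lam ⟨0, _⟩ + (#J - 1) • lam ⟨n - 1, by omega⟩ := by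
          rw [(mem_powersetCard.1 hJ).2, nsmul_eq_mul, Nat.cast_pred (by omega)]
      _ ≤ ∑ i ∈ J, lam i := add_card_sub_one_nsmul_le_sum h0J hlast_le
  have hexp : (n - 1).choose p - 1 < (n - 1).choose (p - 1) := by
    have := Nat.choose_succ_le_choose (m := n - 1) (k := p - 1) (by omega)
    rw [Nat.sub_add_cancel (by omega)] at this
    have := Nat.choose_pos (n := n - 1) (k := p - 1) (by omega)
    omega
  refine ⟨pow_mul_pow_le_Fkk (by omega) hP hI₀ (by simp; omega) (by simp; omega)
    (by positivity) (by positivity) hcontaining fun J hJ _ _ ↦ ?_,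
    div_two_pow_le_half_pow_mul_inv_pow h1 hexp⟩
  exact hsum.trans
    (sum_filter_sub_le_val_le_sum_of_antitone (by omega) hsort (mem_powersetCard.1 hJ).2)
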